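/- arXiv:1611.06352 — 5 statements merged into one kernel-verified Lean document; each statement's English description precedes it below -/
import Mathlib

section
/- Let D be an n×n doubly stochastic matrix with rank r and N nonzero entries. Then N · r ≥ n². -/
/-!
The entries of `D` sum to `n`, so Cauchy–Schwarz over the `N` nonzero entries gives
`n² ≤ N · ∑ dᵢⱼ² = N · tr (Dᵀ D)`. The matrix `Dᵀ D` is symmetric and doubly stochastic, so by
Gershgorin its eigenvalues lie in `[-1, 1]`; as it has `rank D` nonzero eigenvalues, its trace is
at most `rank D`.
-/

open Matrix Finset

namespace Matrix

theorem norm_le_of_hasEigenvalue {K n : Type*} [NormedField K] [Fintype n] [DecidableEq n]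
    {A : Matrix n n K} {c : ℝ} (hA : ∀ i, ∑ j, ‖A i j‖ ≤ c) {μ : K}
    (hμ : Module.End.HasEigenvalue (toLin' A) μ) : ‖μ‖ ≤ c := by
  obtain ⟨k, hk⟩ := eigenvalue_mem_ball hμ
  calc ‖μ‖ ≤ ‖A k k‖ + ‖μ - A k k‖ := norm_le_norm_add_norm_sub' _ _
    _ ≤ ‖A k k‖ + ∑ j ∈ univ.erase k, ‖A k j‖ := by gcongr; exact mem_closedBall_iff_norm.1 hk
    _ = ∑ j, ‖A k j‖ := add_sum_erase _ (fun j => ‖A k j‖) (mem_univ k)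
    _ ≤ c := hA k

theorem abs_le_one_of_mem_spectrum_of_mem_rowStochastic {n : Type*} [Fintype n] [DecidableEq n]
    {M : Matrix n n ℝ} (hM : M ∈ rowStochastic ℝ n) {μ : ℝ} (hμ : μ ∈ spectrum ℝ M) :
    |μ| ≤ 1 := by
  rw [← spectrum_toLin', ← Module.End.hasEigenvalue_iff_mem_spectrum] at hμ
  refine norm_le_of_hasEigenvalue (fun i => ?_) hμ
  rw [mem_rowStochastic_iff_sum] at hM
  simp_rw [Real.norm_of_nonneg (hM.1 i _), hM.2 i, le_refl]

theorem IsHermitian.re_trace_le_rank_mul {𝕜 n : Type*} [RCLike 𝕜] [Fintype n] [DecidableEq n]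
    {A : Matrix n n 𝕜} (hA : A.IsHermitian) {c : ℝ} (hc : ∀ i, hA.eigenvalues i ≤ c) :
    RCLike.re A.trace ≤ A.rank * c := by
  rw [hA.trace_eq_sum_eigenvalues, map_sum, hA.rank_eq_card_non_zero_eigs, Fintype.card_subtype]
  simp only [RCLike.ofReal_re]
  rw [← sum_filter_ne_zero, ← nsmul_eq_mul, ← sum_const]
  exact sum_le_sum fun i _ => hc i

theorem trace_transpose_mul_self {m n R : Type*} [Fintype m] [Fintype n] [CommSemiring R]
    (A : Matrix m n R) : (Aᵀ * A).trace = ∑ i, ∑ j, A i j ^ 2 := by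
  simp only [trace, diag, mul_apply, transpose_apply, sq]
  exact sum_comm

theorem sum_sq_le_rank_of_mem_doublyStochastic {n : Type*} [Fintype n] [DecidableEq n]
    {D : Matrix n n ℝ} (hD : D ∈ doublyStochastic ℝ n) : ∑ i, ∑ j, D i j ^ 2 ≤ D.rank := by
  have hDD : Dᵀ * D ∈ doublyStochastic ℝ n :=
    mul_mem (transpose_mem_doublyStochastic_iff.2 hD) hD
  have hHerm : (Dᵀ * D).IsHermitian := by
    simpa using isHermitian_conjTranspose_mul_self D
  have hev : ∀ i, hHerm.eigenvalues i ≤ 1 := fun i =>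
    (abs_le.1 <| abs_le_one_of_mem_spectrum_of_mem_rowStochastic
      (mem_doublyStochastic_iff_mem_rowStochastic_and_mem_colStochastic.1 hDD).1
      (hHerm.eigenvalues_mem_spectrum_real i)).2
  simpa [trace_transpose_mul_self, rank_transpose_mul_self] using hHerm.re_trace_le_rank_mul hev

theorem sq_sum_le_card_support_mul_sum_sq {m n : Type*} [Fintype m] [Fintype n]
    (D : Matrix m n ℝ) :
    (∑ i, ∑ j, D i j) ^ 2 ≤ (#{p : m × n | D p.1 p.2 ≠ 0} : ℝ) * ∑ i, ∑ j, D i j ^ 2 := by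
  let f : m × n → ℝ := fun p => D p.1 p.2
  have hsum : ∑ i, ∑ j, D i j = ∑ p ∈ {p | f p ≠ 0}, f p := by
    rw [sum_filter_ne_zero]
    exact (Fintype.sum_prod_type' fun i j => D i j).symm
  have hsq : ∑ i, ∑ j, D i j ^ 2 = ∑ p ∈ {p | f p ≠ 0}, f p ^ 2 := by
    rw [sum_filter_of_ne fun _ _ => ne_zero_pow two_ne_zero]
    exact (Fintype.sum_prod_type' fun i j => D i j ^ 2).symm
  rw [hsum, hsq]
  exact sq_sum_le_card_mul_sum_sq

end Matrix

/-- For an `n × n` doubly stochastic matrix with rank `r` and `N` nonzero entries,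
`N · r ≥ n²`. -/
theorem doublyStochastic_card_nonzero_mul_rank {n : ℕ} (D : Matrix (Fin n) (Fin n) ℝ)
    (hpos : ∀ i j, 0 ≤ D i j)
    (hrow : ∀ i, ∑ j, D i j = 1)
    (hcol : ∀ j, ∑ i, D i j = 1) :
    n ^ 2 ≤ (Finset.univ.filter (fun p : Fin n × Fin n => D p.1 p.2 ≠ 0)).card * D.rank := by
  have hD : D ∈ doublyStochastic ℝ (Fin n) := mem_doublyStochastic_iff_sum.2 ⟨hpos, hrow, hcol⟩
  have hsum : ∑ i, ∑ j, D i j = n := by simp [hrow]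
  have key : (n : ℝ) ^ 2 ≤ #{p : Fin n × Fin n | D p.1 p.2 ≠ 0} * (D.rank : ℝ) :=
    calc (n : ℝ) ^ 2 = (∑ i, ∑ j, D i j) ^ 2 := by rw [hsum]
      _ ≤ #{p : Fin n × Fin n | D p.1 p.2 ≠ 0} * ∑ i, ∑ j, D i j ^ 2 :=
        sq_sum_le_card_support_mul_sum_sq D
      _ ≤ #{p : Fin n × Fin n | D p.1 p.2 ≠ 0} * D.rank := by
        gcongr
        exact sum_sq_le_rank_of_mem_doublyStochastic hD
  exact_mod_cast key
end

section
/- Let Φ: M_n(ℂ) → M_n(ℂ) be completely positive, unital, and trace-preserving with Kraus operators {Kᵢ}ᵢ₌₁^p, and define the complementary channel Φ^C(X) = ∑_{i,j} Tr(Kⱼ*KᵢX) E_{ij}. Then rank(Φ) · rank(Φ^C) ≥ n², where rank denotes the rank of the linear map. -/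
/-!
Write `‖f‖₂` for the Hilbert–Schmidt norm of a linear map `f` between matrix spaces, so that
`hsNormSq f = ‖f‖₂²`, while `gramNormSq` of the images under `f` of the matrix units is `‖f* f‖₂²`.
If `M` holds the coordinates of these images in an orthonormal basis of the range of `f`, then
`‖f‖₂² = tr (M Mᴴ)` and `‖f* f‖₂ = ‖M Mᴴ‖_F`, so Cauchy–Schwarz on the diagonal of the
`rank f × rank f` matrix `M Mᴴ` gives `‖f‖₂⁴ ≤ rank f · ‖f* f‖₂²`.

For the complementary channel `‖Φᶜ‖₂² = n`, and `‖Φᶜ* Φᶜ‖₂ = ‖Φ* Φ‖₂` because both are the Gram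
norm of the family `Kⱼ* Kᵢ`, which is a Kraus family of `Φ* Φ`. A unital trace-preserving `Ψ`
contracts the Frobenius norm: `‖Ψ Z‖² = ⟨Z, Ψ* Ψ Z⟩`, and for each Kraus operator `B` of the again
unital trace-preserving `Ψ* Ψ`, AM–GM bounds `|⟨Bᴴ Z, Z Bᴴ⟩|` by the mean of `‖Bᴴ Z‖²` and
`‖Z Bᴴ‖²`, each of which sums over `B` to `‖Z‖²`. For `Ψ = Φ*` this gives
`x := ‖Φ* Φ‖₂² ≤ ‖Φ‖₂² =: y`. Then `y² ≤ rank Φ · x ≤ rank Φ · y` gives `x ≤ rank Φ`, and finally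
`n² ≤ rank Φᶜ · x ≤ rank Φᶜ · rank Φ`.
-/

open Matrix
open scoped InnerProductSpace

variable {𝕜 : Type*} [RCLike 𝕜]

theorem Matrix.re_trace_conjTranspose_mul_self {m n : Type*} [Fintype m] [Fintype n]
    (A : Matrix m n 𝕜) : RCLike.re (trace (Aᴴ * A)) = ∑ i, ∑ j, ‖A i j‖ ^ 2 := by
  simp [trace, mul_apply, Finset.sum_comm (γ := m), RCLike.conj_mul]

theorem Matrix.norm_trace_sq_le_card_mul_sum_norm_sq {ι : Type*} [Fintype ι] (G : Matrix ι ι 𝕜) :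
    ‖trace G‖ ^ 2 ≤ Fintype.card ι * ∑ s, ∑ t, ‖G s t‖ ^ 2 := by
  calc ‖trace G‖ ^ 2 ≤ (∑ s, ‖G s s‖) ^ 2 := by
        gcongr; exact norm_sum_le _ _
    _ ≤ Fintype.card ι * ∑ s, ‖G s s‖ ^ 2 := by
        simpa using sq_sum_le_card_mul_sum_sq (s := Finset.univ) (f := fun s => ‖G s s‖)
    _ ≤ Fintype.card ι * ∑ s, ∑ t, ‖G s t‖ ^ 2 := by
        gcongr with s
        exact Finset.single_le_sum (f := fun t => ‖G s t‖ ^ 2) (fun _ _ => by positivity)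
          (Finset.mem_univ s)

theorem Matrix.sum_norm_sq_conjTranspose_mul_self {m n : Type*} [Fintype m] [Fintype n]
    (U : Matrix m n 𝕜) :
    ∑ s, ∑ t, ‖(Uᴴ * U) s t‖ ^ 2 = ∑ a, ∑ b, ‖(U * Uᴴ) a b‖ ^ 2 := by
  rw [← re_trace_conjTranspose_mul_self, ← re_trace_conjTranspose_mul_self]
  simp only [conjTranspose_mul, conjTranspose_conjTranspose, Matrix.mul_assoc]
  rw [trace_mul_comm]
  simp only [Matrix.mul_assoc]

theorem sq_sum_norm_sq_le_finrank_span_mul_sum_norm_sq_gram {V ι : Type*}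
    [NormedAddCommGroup V] [InnerProductSpace 𝕜 V] [Fintype ι] (v : ι → V) :
    (∑ a, ‖v a‖ ^ 2) ^ 2 ≤
      Module.finrank 𝕜 (Submodule.span 𝕜 (Set.range v)) * ∑ a, ∑ b, ‖gram 𝕜 v a b‖ ^ 2 := by
  set U := Submodule.span 𝕜 (Set.range v)
  have : FiniteDimensional 𝕜 U := FiniteDimensional.span_of_finite 𝕜 (Set.finite_range v)
  let w : ι → U := fun a => ⟨v a, Submodule.subset_span (Set.mem_range_self a)⟩
  set M := of fun s a => (stdOrthonormalBasis 𝕜 U).repr (w a) s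
  have hM : gram 𝕜 v = Mᴴ * M := gram_eq_conjTranspose_mul _ w
  have htrace : ∑ a, ‖v a‖ ^ 2 = RCLike.re (trace (M * Mᴴ)) := by
    rw [trace_mul_comm, ← hM]
    simp [trace]
  calc (∑ a, ‖v a‖ ^ 2) ^ 2 ≤ ‖trace (M * Mᴴ)‖ ^ 2 := by
        rw [htrace, sq_le_sq, abs_norm]
        exact RCLike.abs_re_le_norm _
    _ ≤ Module.finrank 𝕜 U * ∑ s, ∑ t, ‖(M * Mᴴ) s t‖ ^ 2 := by
        simpa using norm_trace_sq_le_card_mul_sum_norm_sq (M * Mᴴ)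
    _ = Module.finrank 𝕜 U * ∑ a, ∑ b, ‖gram 𝕜 v a b‖ ^ 2 := by
        rw [hM, sum_norm_sq_conjTranspose_mul_self]

namespace Matrix

variable {m n m' n' κ : Type*}

def toEuclideanSpace : Matrix m n 𝕜 ≃ₗ[𝕜] EuclideanSpace 𝕜 (m × n) where
  toFun A := WithLp.toLp 2 fun q => A q.1 q.2
  invFun x := of fun i j => x (i, j)
  map_add' _ _ := rfl
  map_smul' _ _ := rfl
  left_inv _ := rfl
  right_inv _ := rfl

@[simp]
theorem toEuclideanSpace_apply (A : Matrix m n 𝕜) (q : m × n) :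
    toEuclideanSpace A q = A q.1 q.2 := rfl

def krausMap [Fintype n] [Fintype κ] (A : κ → Matrix m n 𝕜) :
    Matrix n n 𝕜 →ₗ[𝕜] Matrix m m 𝕜 where
  toFun X := ∑ a, A a * X * (A a)ᴴ
  map_add' X Y := by simp [Matrix.mul_add, Matrix.add_mul, Finset.sum_add_distrib]
  map_smul' c X := by simp [Finset.smul_sum]

theorem krausMap_apply [Fintype n] [Fintype κ] (A : κ → Matrix m n 𝕜) (X : Matrix n n 𝕜) :
    krausMap A X = ∑ a, A a * X * (A a)ᴴ := rfl

def complementaryMap [Fintype m] [Fintype n] (K : κ → Matrix m n 𝕜) :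
    Matrix n n 𝕜 →ₗ[𝕜] Matrix κ κ 𝕜 where
  toFun X := of fun i j => trace ((K j)ᴴ * K i * X)
  map_add' X Y := by ext; simp [Matrix.mul_add]
  map_smul' c X := by ext; simp

theorem complementaryMap_single_apply [Fintype m] [Fintype n] [DecidableEq n]
    (K : κ → Matrix m n 𝕜) (c d : n) (i j : κ) :
    complementaryMap K (single c d 1) i j = ((K j)ᴴ * K i) d c := by
  simp [complementaryMap, trace_mul_single]

variable [Fintype m] [Fintype n] [Fintype m'] [Fintype n'] [Fintype κ]

theorem trace_conjTranspose_mul_eq_sum (A B : Matrix m n 𝕜) :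
    trace (Aᴴ * B) = ∑ q : m × n, star (A q.1 q.2) * B q.1 q.2 := by
  simp [trace, mul_apply, Fintype.sum_prod_type, Finset.sum_comm (γ := m)]

theorem inner_toEuclideanSpace (A B : Matrix m n 𝕜) :
    ⟪toEuclideanSpace A, toEuclideanSpace B⟫_𝕜 = trace (Aᴴ * B) := by
  simp [PiLp.inner_apply, trace, mul_apply, Fintype.sum_prod_type,
    Finset.sum_comm (γ := m), mul_comm]

theorem norm_toEuclideanSpace_sq (A : Matrix m n 𝕜) :
    ‖toEuclideanSpace A‖ ^ 2 = ∑ i, ∑ j, ‖A i j‖ ^ 2 := by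
  rw [← inner_self_eq_norm_sq (𝕜 := 𝕜), inner_toEuclideanSpace, re_trace_conjTranspose_mul_self]

theorem norm_trace_conjTranspose_mul_le (A B : Matrix m n 𝕜) :
    ‖trace (Aᴴ * B)‖ ≤ (∑ i, ∑ j, ‖A i j‖ ^ 2 + ∑ i, ∑ j, ‖B i j‖ ^ 2) / 2 := by
  rw [← inner_toEuclideanSpace, ← norm_toEuclideanSpace_sq, ← norm_toEuclideanSpace_sq]
  nlinarith [norm_inner_le_norm (𝕜 := 𝕜) (toEuclideanSpace A) (toEuclideanSpace B),
    sq_nonneg (‖toEuclideanSpace A‖ - ‖toEuclideanSpace B‖)]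

def gramNormSq (A : κ → Matrix m n 𝕜) : ℝ :=
  ∑ a, ∑ b, ‖trace ((A a)ᴴ * A b)‖ ^ 2

theorem gramNormSq_eq_sum_sum_norm_sq (A : κ → Matrix m n 𝕜) :
    gramNormSq A = ∑ s : m × n, ∑ t : m × n, ‖∑ a, star (A a s.1 s.2) * A a t.1 t.2‖ ^ 2 := by
  set U : Matrix κ (m × n) 𝕜 := of fun a s => A a s.1 s.2
  have hUU : ∀ a b, (U * Uᴴ) a b = trace ((A b)ᴴ * A a) := by
    intro a b
    simp [U, mul_apply, trace, Fintype.sum_prod_type, Finset.sum_comm (γ := m), mul_comm]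
  have := sum_norm_sq_conjTranspose_mul_self U
  simp only [hUU] at this
  rw [gramNormSq, Finset.sum_comm, ← this]
  simp [U, mul_apply]

def hsNormSq [DecidableEq m] [DecidableEq n] (f : Matrix m n 𝕜 →ₗ[𝕜] Matrix m' n' 𝕜) : ℝ :=
  ∑ q : m × n, ∑ i, ∑ j, ‖f (single q.1 q.2 1) i j‖ ^ 2

theorem hsNormSq_comp_le [DecidableEq m] [DecidableEq n]
    (f : Matrix m n 𝕜 →ₗ[𝕜] Matrix m' n' 𝕜) (g : Matrix m' n' 𝕜 →ₗ[𝕜] Matrix m' n' 𝕜)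
    (hg : ∀ Z, ∑ i, ∑ j, ‖g Z i j‖ ^ 2 ≤ ∑ i, ∑ j, ‖Z i j‖ ^ 2) :
    hsNormSq (g ∘ₗ f) ≤ hsNormSq f :=
  Finset.sum_le_sum fun _ _ => hg _

theorem span_range_single [DecidableEq m] [DecidableEq n] :
    Submodule.span 𝕜 (Set.range fun q : m × n => single q.1 q.2 (1 : 𝕜)) = ⊤ := by
  rw [show (fun q : m × n => single q.1 q.2 (1 : 𝕜)) = stdBasis 𝕜 m n from
    funext fun q => (stdBasis_eq_single 𝕜 q.1 q.2).symm]
  exact (stdBasis 𝕜 m n).span_eq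

theorem sq_hsNormSq_le_finrank_range_mul_gramNormSq [DecidableEq m] [DecidableEq n]
    (f : Matrix m n 𝕜 →ₗ[𝕜] Matrix m' n' 𝕜) :
    hsNormSq f ^ 2 ≤
      Module.finrank 𝕜 (LinearMap.range f) * gramNormSq fun q : m × n => f (single q.1 q.2 1) := by
  set v := fun q : m × n => toEuclideanSpace (f (single q.1 q.2 1))
  have hspan : Submodule.span 𝕜 (Set.range v) =
      (LinearMap.range f).map (toEuclideanSpace : Matrix m' n' 𝕜 ≃ₗ[𝕜] _).toLinearMap := by
    rw [← LinearMap.range_comp, LinearMap.range_eq_map, ← span_range_single, Submodule.map_span,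
      ← Set.range_comp]
    rfl
  have := sq_sum_norm_sq_le_finrank_span_mul_sum_norm_sq_gram (𝕜 := 𝕜) v
  rw [hspan, LinearEquiv.finrank_map_eq] at this
  simpa [v, norm_toEuclideanSpace_sq, inner_toEuclideanSpace, hsNormSq, gramNormSq] using this

theorem trace_conjTranspose_single_mul [DecidableEq m] [DecidableEq n] (i : m) (j : n)
    (M : Matrix m n 𝕜) :
    trace ((single i j (1 : 𝕜))ᴴ * M) = M i j := by
  rw [conjTranspose_single, star_one, trace_single_mul, one_smul]

theorem gramNormSq_eq_hsNormSq_comp [DecidableEq m] [DecidableEq n]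
    (f : Matrix m n 𝕜 →ₗ[𝕜] Matrix m' n' 𝕜) (g : Matrix m' n' 𝕜 →ₗ[𝕜] Matrix m n 𝕜)
    (hfg : ∀ X Y, trace ((f X)ᴴ * Y) = trace (Xᴴ * g Y)) :
    gramNormSq (fun q : m × n => f (single q.1 q.2 1)) = hsNormSq (g ∘ₗ f) := by
  simp only [gramNormSq, hsNormSq, hfg, trace_conjTranspose_single_mul, LinearMap.comp_apply]
  rw [Finset.sum_comm]
  simp only [Fintype.sum_prod_type]

theorem krausMap_comp {l κ' : Type*} [Fintype κ'] (B : κ' → Matrix l m 𝕜) (A : κ → Matrix m n 𝕜) :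
    krausMap B ∘ₗ krausMap A = krausMap fun p : κ × κ' => B p.2 * A p.1 := by
  ext1 X
  simp [krausMap_apply, Fintype.sum_prod_type, Finset.sum_comm (γ := κ), Matrix.mul_assoc]

theorem trace_conjTranspose_krausMap_mul (A : κ → Matrix m n 𝕜) (X : Matrix n n 𝕜)
    (Y : Matrix m m 𝕜) :
    trace ((krausMap A X)ᴴ * Y) = trace (Xᴴ * krausMap (fun a => (A a)ᴴ) Y) := by
  simp only [krausMap_apply, conjTranspose_sum, conjTranspose_mul, conjTranspose_conjTranspose,
    Finset.sum_mul, Finset.mul_sum, trace_sum]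
  refine Finset.sum_congr rfl fun a _ => ?_
  rw [Matrix.mul_assoc, Matrix.mul_assoc, trace_mul_comm]
  simp only [Matrix.mul_assoc]

theorem hsNormSq_krausMap [DecidableEq n] (A : κ → Matrix m n 𝕜) :
    hsNormSq (krausMap A) = gramNormSq A := by
  have hentry : ∀ (c d : n) (a b : m),
      krausMap A (single c d 1) a b = ∑ α, star (A α b d) * A α a c := by
    intro c d a b
    simp [krausMap_apply, sum_apply, mul_apply, single, ite_and, mul_comm]
  rw [gramNormSq_eq_sum_sum_norm_sq, hsNormSq]
  simp only [hentry, ← Fintype.sum_prod_type']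
  exact Fintype.sum_equiv
    { toFun := fun x => ((x.2.2, x.1.2), (x.2.1, x.1.1))
      invFun := fun y => ((y.2.2, y.1.2), (y.2.1, y.1.1))
      left_inv := fun _ => rfl
      right_inv := fun _ => rfl } _ _ fun _ => rfl

theorem sum_conjTranspose_mul_mul_conjTranspose_mul [DecidableEq m] (A : κ → Matrix m n 𝕜)
    (h : ∑ b, A b * (A b)ᴴ = 1) (a : κ) :
    ∑ b, (A a)ᴴ * A b * ((A b)ᴴ * A a) = (A a)ᴴ * A a := by
  calc ∑ b, (A a)ᴴ * A b * ((A b)ᴴ * A a) = (A a)ᴴ * (∑ b, A b * (A b)ᴴ) * A a := by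
        rw [Matrix.mul_sum, Matrix.sum_mul]
        simp only [Matrix.mul_assoc]
    _ = (A a)ᴴ * A a := by rw [h, Matrix.mul_one]

theorem sum_sum_conjTranspose_mul_mul_conjTranspose_mul [DecidableEq m] [DecidableEq n]
    (A : κ → Matrix m n 𝕜) (h1 : ∑ a, A a * (A a)ᴴ = 1) (h2 : ∑ a, (A a)ᴴ * A a = 1) :
    ∑ a, ∑ b, (A a)ᴴ * A b * ((A b)ᴴ * A a) = 1 := by
  simp only [sum_conjTranspose_mul_mul_conjTranspose_mul A h1, h2]

theorem re_trace_conjTranspose_mul_krausMap_le [DecidableEq n] (B : κ → Matrix n n 𝕜)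
    (h1 : ∑ a, B a * (B a)ᴴ = 1) (h2 : ∑ a, (B a)ᴴ * B a = 1) (Z : Matrix n n 𝕜) :
    RCLike.re (trace (Zᴴ * krausMap B Z)) ≤ ∑ i, ∑ j, ‖Z i j‖ ^ 2 := by
  have hleft : ∑ a, ∑ i, ∑ j, ‖((B a)ᴴ * Z) i j‖ ^ 2 = ∑ i, ∑ j, ‖Z i j‖ ^ 2 := by
    simp only [← re_trace_conjTranspose_mul_self, ← map_sum, ← trace_sum, conjTranspose_mul,
      conjTranspose_conjTranspose]
    have : ∑ a, Zᴴ * B a * ((B a)ᴴ * Z) = Zᴴ * (∑ a, B a * (B a)ᴴ) * Z := by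
      simp only [Finset.mul_sum, Finset.sum_mul, Matrix.mul_assoc]
    rw [this, h1, Matrix.mul_one]
  have hright : ∑ a, ∑ i, ∑ j, ‖(Z * (B a)ᴴ) i j‖ ^ 2 = ∑ i, ∑ j, ‖Z i j‖ ^ 2 := by
    simp only [← re_trace_conjTranspose_mul_self, ← map_sum, ← trace_sum, conjTranspose_mul,
      conjTranspose_conjTranspose]
    have : ∀ a, trace (B a * Zᴴ * (Z * (B a)ᴴ)) = trace (Zᴴ * Z * ((B a)ᴴ * B a)) := by
      intro a
      simp only [Matrix.mul_assoc]
      rw [trace_mul_comm (B a)]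
      simp only [Matrix.mul_assoc]
    rw [trace_sum]
    simp only [this, ← trace_sum, ← Finset.mul_sum, h2, Matrix.mul_one]
  calc RCLike.re (trace (Zᴴ * krausMap B Z))
      = RCLike.re (∑ a, trace (((B a)ᴴ * Z)ᴴ * (Z * (B a)ᴴ))) := by
        simp [krausMap_apply, Finset.mul_sum, Matrix.mul_assoc, trace_sum]
    _ ≤ ∑ a, ‖trace (((B a)ᴴ * Z)ᴴ * (Z * (B a)ᴴ))‖ :=
        (RCLike.re_le_norm _).trans (norm_sum_le _ _)
    _ ≤ ∑ a, (∑ i, ∑ j, ‖((B a)ᴴ * Z) i j‖ ^ 2 + ∑ i, ∑ j, ‖(Z * (B a)ᴴ) i j‖ ^ 2) / 2 :=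
        Finset.sum_le_sum fun a _ => norm_trace_conjTranspose_mul_le _ _
    _ = ∑ i, ∑ j, ‖Z i j‖ ^ 2 := by
        rw [← Finset.sum_div, Finset.sum_add_distrib, hleft, hright]; ring

theorem sum_norm_sq_krausMap_apply_le [DecidableEq m] [DecidableEq n] (A : κ → Matrix m n 𝕜)
    (h1 : ∑ a, A a * (A a)ᴴ = 1) (h2 : ∑ a, (A a)ᴴ * A a = 1) (Z : Matrix n n 𝕜) :
    ∑ i, ∑ j, ‖krausMap A Z i j‖ ^ 2 ≤ ∑ i, ∑ j, ‖Z i j‖ ^ 2 := by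
  set Q : κ × κ → Matrix n n 𝕜 := fun p => (A p.2)ᴴ * A p.1
  have hQ1 : ∑ p, Q p * (Q p)ᴴ = 1 := by
    rw [Fintype.sum_prod_type, Finset.sum_comm]
    simpa [Q, Matrix.mul_assoc] using sum_sum_conjTranspose_mul_mul_conjTranspose_mul A h1 h2
  have hQ2 : ∑ p, (Q p)ᴴ * Q p = 1 := by
    rw [Fintype.sum_prod_type]
    simpa [Q, Matrix.mul_assoc] using sum_sum_conjTranspose_mul_mul_conjTranspose_mul A h1 h2
  have hadj : trace ((krausMap A Z)ᴴ * krausMap A Z) = trace (Zᴴ * krausMap Q Z) := by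
    rw [trace_conjTranspose_krausMap_mul, ← LinearMap.comp_apply, krausMap_comp]
  rw [← re_trace_conjTranspose_mul_self, hadj]
  exact re_trace_conjTranspose_mul_krausMap_le Q hQ1 hQ2 Z

theorem hsNormSq_complementaryMap [DecidableEq m] [DecidableEq n] (K : κ → Matrix m n 𝕜)
    (h : ∑ a, K a * (K a)ᴴ = 1) :
    hsNormSq (complementaryMap K) = Fintype.card m := by
  calc hsNormSq (complementaryMap K)
      = ∑ i, ∑ j, ∑ q : n × n, ‖((K j)ᴴ * K i) q.2 q.1‖ ^ 2 := by
        simp only [hsNormSq, complementaryMap_single_apply]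
        rw [Finset.sum_comm]
        exact Finset.sum_congr rfl fun i _ => Finset.sum_comm
    _ = ∑ i, ∑ j, RCLike.re (trace (((K j)ᴴ * K i)ᴴ * ((K j)ᴴ * K i))) := by
        simp only [re_trace_conjTranspose_mul_self, Fintype.sum_prod_type]
        exact Finset.sum_congr rfl fun i _ => Finset.sum_congr rfl fun j _ => Finset.sum_comm
    _ = RCLike.re (trace (∑ i, K i * (K i)ᴴ)) := by
        simp only [conjTranspose_mul, conjTranspose_conjTranspose, ← map_sum, ← trace_sum,
          sum_conjTranspose_mul_mul_conjTranspose_mul K h]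
        simp only [trace_sum, trace_mul_comm (K _)ᴴ]
    _ = Fintype.card m := by simp [h]

theorem gramNormSq_complementaryMap [DecidableEq n] (K : κ → Matrix m n 𝕜) :
    gramNormSq (fun q : n × n => complementaryMap K (single q.1 q.2 1)) =
      gramNormSq fun p : κ × κ => (K p.2)ᴴ * K p.1 := by
  rw [gramNormSq_eq_sum_sum_norm_sq, gramNormSq]
  refine Finset.sum_congr rfl fun s _ => Finset.sum_congr rfl fun t _ => ?_
  rw [trace_conjTranspose_mul_eq_sum]
  simp only [complementaryMap_single_apply]
  rw [← Fintype.sum_equiv (Equiv.prodComm n n) _ _ fun _ => rfl]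
  rfl

end Matrix

/-- For a unital, trace-preserving completely positive map `Φ : Mₙ(ℂ) → Mₙ(ℂ)` with
Kraus operators `{Kᵢ}` and complementary channel `Φ^C(X) = ∑_{i,j} Tr(Kⱼ* Kᵢ X) E_{ij}`,
`rank(Φ) · rank(Φ^C) ≥ n²`. -/
theorem rank_mul_rank_complement_ge_sq {n p : ℕ}
    (K : Fin p → Matrix (Fin n) (Fin n) ℂ)
    (hu : ∑ i, K i * (K i)ᴴ = 1)
    (htp : ∑ i, (K i)ᴴ * K i = 1)
    (Φ : Matrix (Fin n) (Fin n) ℂ →ₗ[ℂ] Matrix (Fin n) (Fin n) ℂ)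
    (ΦC : Matrix (Fin n) (Fin n) ℂ →ₗ[ℂ] Matrix (Fin p) (Fin p) ℂ)
    (hΦ : ∀ X, Φ X = ∑ i, K i * X * (K i)ᴴ)
    (hΦC : ∀ X, ΦC X = Matrix.of fun i j => Matrix.trace ((K j)ᴴ * K i * X)) :
    n ^ 2 ≤ Module.finrank ℂ (LinearMap.range Φ) * Module.finrank ℂ (LinearMap.range ΦC) := by
  obtain rfl : Φ = krausMap K := LinearMap.ext hΦ
  obtain rfl : ΦC = complementaryMap K := LinearMap.ext hΦC
  set Q := fun i : Fin p × Fin p => (K i.2)ᴴ * K i.1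
  have hcomp : krausMap (fun i => (K i)ᴴ) ∘ₗ krausMap K = krausMap Q := krausMap_comp _ _
  have hΦ_rank := sq_hsNormSq_le_finrank_range_mul_gramNormSq (krausMap K)
  rw [hsNormSq_krausMap, gramNormSq_eq_hsNormSq_comp _ _ (trace_conjTranspose_krausMap_mul K),
    hcomp, hsNormSq_krausMap] at hΦ_rank
  have hΦC_rank := sq_hsNormSq_le_finrank_range_mul_gramNormSq (complementaryMap K)
  rw [hsNormSq_complementaryMap K hu, gramNormSq_complementaryMap, Fintype.card_fin] at hΦC_rank
  have hQK : gramNormSq Q ≤ gramNormSq K := by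
    rw [← hsNormSq_krausMap, ← hsNormSq_krausMap, ← hcomp]
    exact hsNormSq_comp_le _ _
      (sum_norm_sq_krausMap_apply_le _ (by simpa using htp) (by simpa using hu))
  have hQ_nonneg : 0 ≤ gramNormSq Q := by unfold gramNormSq; positivity
  have hQ_rank : gramNormSq Q ≤ Module.finrank ℂ (LinearMap.range (krausMap K)) := by
    rcases hQ_nonneg.eq_or_lt with h | h
    · rw [← h]; positivity
    · exact le_of_mul_le_mul_right (by nlinarith) h
  have : ((n ^ 2 : ℕ) : ℝ) ≤ Module.finrank ℂ (LinearMap.range (krausMap K)) *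
      Module.finrank ℂ (LinearMap.range (complementaryMap K)) := by
    push_cast
    nlinarith
  exact_mod_cast this
end

section
/- Let Φ: M_n(ℂ) → M_m(ℂ) be a unital completely positive map with Kraus operators {Kᵢ}. If a matrix A commutes with Kᵢ*Kⱼ for all i,j, then A is in the multiplicative domain of Φ: Φ(A)Φ(X) = Φ(AX) for all X. -/
open Matrix

/-- For a unital completely positive map `Φ(X) = ∑ᵢ Kᵢ X Kᵢ*` (`∑ᵢ Kᵢ Kᵢ* = I`):
if `A` commutes with every `Kᵢ* Kⱼ`, then `A` is in the multiplicative domain of `Φ`: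
`Φ(A) Φ(X) = Φ(A X)` for all `X`. -/
theorem commutant_subset_multiplicativeDomain {n m p : ℕ}
    (K : Fin p → Matrix (Fin m) (Fin n) ℂ)
    (hu : ∑ i, K i * (K i)ᴴ = 1)
    (A : Matrix (Fin n) (Fin n) ℂ)
    (hA : ∀ i j, A * ((K i)ᴴ * K j) = ((K i)ᴴ * K j) * A) :
    ∀ X : Matrix (Fin n) (Fin n) ℂ,
      (∑ i, K i * A * (K i)ᴴ) * (∑ i, K i * X * (K i)ᴴ) = ∑ i, K i * (A * X) * (K i)ᴴ := by
  intro X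
  rw [Finset.sum_mul_sum]
  have key : ∀ i j, (K i * A * (K i)ᴴ) * (K j * X * (K j)ᴴ)
      = (K i * (K i)ᴴ) * (K j * (A * X) * (K j)ᴴ) := by
    intro i j
    have h := hA i j
    calc (K i * A * (K i)ᴴ) * (K j * X * (K j)ᴴ)
        = K i * (A * ((K i)ᴴ * K j)) * (X * (K j)ᴴ) := by
          simp only [Matrix.mul_assoc]
      _ = K i * (((K i)ᴴ * K j) * A) * (X * (K j)ᴴ) := by rw [h]
      _ = (K i * (K i)ᴴ) * (K j * (A * X) * (K j)ᴴ) := by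
          simp only [Matrix.mul_assoc]
  calc ∑ i, ∑ j, (K i * A * (K i)ᴴ) * (K j * X * (K j)ᴴ)
      = ∑ i, ∑ j, (K i * (K i)ᴴ) * (K j * (A * X) * (K j)ᴴ) := by
        exact Finset.sum_congr rfl fun i _ => Finset.sum_congr rfl fun j _ => key i j
    _ = ∑ j, (∑ i, K i * (K i)ᴴ) * (K j * (A * X) * (K j)ᴴ) := by
        rw [Finset.sum_comm]
        exact Finset.sum_congr rfl fun j _ => (Finset.sum_mul ..).symm
    _ = ∑ j, K j * (A * X) * (K j)ᴴ := by rw [hu]; simp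
end

section
/- For the Schur product channel Φ(X) = C ∘ X with C a correlation matrix, Φ†∘Φ is the Schur product channel with matrix C ∘ conj(C), and its fixed points are exactly the matrices X with x_{ij} = 0 whenever |c_{ij}| ≠ 1; consequently the multiplicative domain of Φ is {X : x_{ij} ≠ 0 ⟹ |c_{ij}| = 1}. -/
/-!
Entries of a positive semidefinite matrix with unit diagonal satisfy `‖c_ij‖ ≤ 1`. When
`‖c_ik‖ = 1`, the vector `e_i - conj c_ik • e_k` is isotropic for `C`, hence lies in its kernel,
which gives `c_ik c_kj = c_ij` for all `j`; so `Φ = (C ⊙ ·)` is multiplicative against any matrix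
supported on the unimodular entries of `C`. Conversely, the diagonal of
`Φ(A) Φ(Aᴴ) = Φ(A Aᴴ)` reads `∑ₖ ‖c_ik‖² ‖a_ik‖² = ∑ₖ ‖a_ik‖²`, which forces `‖c_ik‖ = 1`
wherever `a_ik ≠ 0`.
-/

open scoped ComplexOrder

open Matrix

namespace Matrix

open ComplexConjugate

variable {ι 𝕜 : Type*} [RCLike 𝕜]

theorem _root_.RCLike.mul_conj_mul_eq_self_iff {z x : 𝕜} :
    z * conj z * x = x ↔ (x ≠ 0 → ‖z‖ = 1) := by
  rw [RCLike.mul_conj]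
  refine ⟨fun h hx => ?_, fun h => ?_⟩
  · rw [mul_eq_right₀ hx] at h
    exact (pow_eq_one_iff_of_nonneg (norm_nonneg z) two_ne_zero).1 (by exact_mod_cast h)
  · rcases eq_or_ne x 0 with rfl | hx
    · rw [mul_zero]
    · rw [h hx, RCLike.ofReal_one, one_pow, one_mul]

theorem hadamard_map_conj_hadamard_eq_self_iff {κ : Type*} (C X : Matrix ι κ 𝕜) :
    (C ⊙ C.map conj) ⊙ X = X ↔ ∀ i j, X i j ≠ 0 → ‖C i j‖ = 1 := by
  simp only [← Matrix.ext_iff, hadamard_apply, map_apply, RCLike.mul_conj_mul_eq_self_iff]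

variable [Fintype ι]

theorem hadamard_mul_hadamard_of_apply_mul_apply {α : Type*} [CommSemiring α]
    {C A B : Matrix ι ι α} (h : ∀ i k j, A i k * B k j ≠ 0 → C i k * C k j = C i j) :
    (C ⊙ A) * (C ⊙ B) = C ⊙ (A * B) := by
  ext i j
  simp only [mul_apply, hadamard_apply, Finset.mul_sum]
  refine Finset.sum_congr rfl fun k _ => ?_
  rw [mul_mul_mul_comm]
  rcases eq_or_ne (A i k * B k j) 0 with h0 | h0
  · rw [h0, mul_zero, mul_zero]
  · rw [h i k j h0]

variable {C : Matrix ι ι 𝕜}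

theorem star_dotProduct_mulVec_single_sub_single [DecidableEq ι] (hC : C.IsHermitian)
    (hdiag : ∀ i, C i i = 1) (i k : ι) :
    star (Pi.single i 1 - Pi.single k (conj (C i k))) ⬝ᵥ
      C *ᵥ (Pi.single i 1 - Pi.single k (conj (C i k))) = ((1 - ‖C i k‖ ^ 2 : ℝ) : 𝕜) := by
  have hki : C k i = conj (C i k) := (hC.apply k i).symm
  simp only [star_sub, ← Pi.single_star, mulVec_sub, mulVec_single, sub_dotProduct,
    dotProduct_sub, single_dotProduct, Pi.smul_apply, op_smul_eq_mul, col_apply, hdiag, hki,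
    star_one, one_mul, mul_one]
  push_cast
  rw [← RCLike.mul_conj]
  simp [RCLike.star_def]

namespace PosSemidef

variable (hC : C.PosSemidef) (hdiag : ∀ i, C i i = 1)
include hC hdiag

theorem norm_apply_le_one (i j : ι) : ‖C i j‖ ≤ 1 := by
  classical
  have h := hC.dotProduct_mulVec_nonneg (Pi.single i 1 - Pi.single j (conj (C i j)))
  rw [star_dotProduct_mulVec_single_sub_single hC.1 hdiag, RCLike.ofReal_nonneg, sub_nonneg] at h
  exact (pow_le_one_iff_of_nonneg (norm_nonneg _) two_ne_zero).1 h

theorem apply_mul_apply_of_norm_left_eq_one {i k : ι} (h : ‖C i k‖ = 1) (j : ι) :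
    C i k * C k j = C i j := by
  classical
  have hconj (a b : ι) : conj (C a b) = C b a := hC.1.apply b a
  have hzero := (hC.dotProduct_mulVec_zero_iff _).1 <| by
    rw [star_dotProduct_mulVec_single_sub_single hC.1 hdiag, h]
    norm_num
  have hj := congrArg (fun v => conj (v j)) hzero
  simp only [mulVec_sub, mulVec_single, Pi.sub_apply, Pi.smul_apply, op_smul_eq_mul, col_apply,
    mul_one, Pi.zero_apply, map_sub, map_mul, map_zero, sub_eq_zero, hconj] at hj
  rw [hj, mul_comm]

theorem apply_mul_apply_of_norm_right_eq_one {k j : ι} (h : ‖C k j‖ = 1) (i : ι) :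
    C i k * C k j = C i j := by
  have hconj (a b : ι) : conj (C a b) = C b a := hC.1.apply b a
  have hjk : ‖C j k‖ = 1 := by rw [← hconj, RCLike.norm_conj, h]
  have := congrArg conj (hC.apply_mul_apply_of_norm_left_eq_one hdiag hjk i)
  rwa [map_mul, hconj, hconj, hconj, mul_comm] at this

theorem norm_apply_eq_one_of_hadamard_mul_hadamard_conjTranspose {A : Matrix ι ι 𝕜}
    (hA : (C ⊙ A) * (C ⊙ Aᴴ) = C ⊙ (A * Aᴴ)) {i k : ι} (hik : A i k ≠ 0) : ‖C i k‖ = 1 := by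
  have hconj (a b : ι) : conj (C a b) = C b a := hC.1.apply b a
  have hrow : ∑ l, ‖C i l‖ ^ 2 * ‖A i l‖ ^ 2 = ∑ l, ‖A i l‖ ^ 2 := by
    have h := congrFun (congrFun hA i) i
    simp only [mul_apply, hadamard_apply, conjTranspose_apply, hdiag, one_mul, RCLike.star_def] at h
    simp only [← hconj i, mul_mul_mul_comm _ (A i _), RCLike.mul_conj] at h
    exact_mod_cast h
  have hle (l : ι) (_ : l ∈ Finset.univ) : ‖C i l‖ ^ 2 * ‖A i l‖ ^ 2 ≤ ‖A i l‖ ^ 2 :=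
    mul_le_of_le_one_left (sq_nonneg _) <|
      pow_le_one₀ (norm_nonneg _) (hC.norm_apply_le_one hdiag i l)
  have hk := (Finset.sum_eq_sum_iff_of_le hle).1 hrow k (Finset.mem_univ k)
  rw [mul_eq_right₀ (by positivity)] at hk
  exact (pow_eq_one_iff_of_nonneg (norm_nonneg _) two_ne_zero).1 hk

end PosSemidef

end Matrix

/-- For the Schur product channel `Φ(X) = C ∘ X` with `C` a correlation matrix:
`Φ† ∘ Φ` is the Schur product channel with matrix `C ∘ conj C`, its fixed points are
exactly the matrices supported where `|c_{ij}| = 1`, and consequently the multiplicative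
domain of `Φ` is `{X : x_{ij} ≠ 0 → |c_{ij}| = 1}`. -/
theorem schur_multiplicativeDomain {n : ℕ} (C : Matrix (Fin n) (Fin n) ℂ)
    (hC : C.PosSemidef) (hdiag : ∀ i, C i i = 1) :
    (∀ X : Matrix (Fin n) (Fin n) ℂ,
      C.map (starRingEnd ℂ) ⊙ (C ⊙ X) = (C ⊙ C.map (starRingEnd ℂ)) ⊙ X) ∧
    (∀ X : Matrix (Fin n) (Fin n) ℂ,
      (C ⊙ C.map (starRingEnd ℂ)) ⊙ X = X ↔
        ∀ i j, X i j ≠ 0 → ‖C i j‖ = 1) ∧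
    (∀ A : Matrix (Fin n) (Fin n) ℂ,
      (∀ Y : Matrix (Fin n) (Fin n) ℂ,
        (C ⊙ A) * (C ⊙ Y) = C ⊙ (A * Y) ∧ (C ⊙ Y) * (C ⊙ A) = C ⊙ (Y * A)) ↔
      ∀ i j, A i j ≠ 0 → ‖C i j‖ = 1) := by
  refine ⟨fun X => ?_, hadamard_map_conj_hadamard_eq_self_iff C,
    fun A => ⟨fun h _ _ => ?_, fun hA Y => ⟨?_, ?_⟩⟩⟩
  · rw [← hadamard_assoc, hadamard_comm (C.map _)]
  · exact hC.norm_apply_eq_one_of_hadamard_mul_hadamard_conjTranspose hdiag (h Aᴴ).1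
  · exact hadamard_mul_hadamard_of_apply_mul_apply fun i k j hAY =>
      hC.apply_mul_apply_of_norm_left_eq_one hdiag (hA i k (left_ne_zero_of_mul hAY)) j
  · exact hadamard_mul_hadamard_of_apply_mul_apply fun i k j hYA =>
      hC.apply_mul_apply_of_norm_right_eq_one hdiag (hA k j (right_ne_zero_of_mul hYA)) i
end

section
/- Let Φ: M_n(ℂ) → M_n(ℂ) be unital, trace-preserving, and completely positive, and define the matrix D_Φ by (D_Φ)_{ij} = Φ(E_{ii})_{jj}. Then D_Φ is doubly stochastic and rank(Φ) ≥ rank(D_Φ). -/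
/-!
In Kraus form `D i j = ∑ₖ |Kₖ j i|²`, so the row and column sums of `D` are the diagonal entries
of `∑ₖ Kₖᴴ Kₖ = 1` and `∑ₖ Kₖ Kₖᴴ = 1`. For the rank, the complexified transpose of `D` is the
matrix of `diag ∘ Φ ∘ diagonal`, whose rank is at most that of `Φ`, and complexification does not
lower the rank of a real matrix: a basis of the column space chosen among the columns stays
linearly independent over `ℂ`.
-/

open Matrix Module Submodule

theorem Matrix.rank_le_rank_map_algebraMap {K L m n : Type*} [Field K] [Field L] [Algebra K L]
    [Finite m] [Fintype n] (A : Matrix m n K) :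
    A.rank ≤ (A.map (algebraMap K L)).rank := by
  obtain ⟨s, hs_cols, hs_span, hs_li⟩ := exists_linearIndependent K (Set.range A.col)
  have : Fintype s := ((Set.finite_range A.col).subset hs_cols).fintype
  have hs_li' : LinearIndependent L (fun v : s ↦ algebraMap K L ∘ (v : m → K)) :=
    linearIndependent_algebraMap_comp_iff.mpr hs_li
  rw [rank_eq_finrank_span_cols, rank_eq_finrank_span_cols, ← hs_span,
    finrank_span_set_eq_card hs_li, Set.toFinset_card, ← finrank_span_eq_card hs_li']
  refine finrank_mono (span_mono ?_)
  rintro _ ⟨⟨v, hv⟩, rfl⟩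
  obtain ⟨j, rfl⟩ := hs_cols hv
  exact ⟨j, rfl⟩

theorem LinearMap.finrank_range_comp_comp_le {K U V W X : Type*} [DivisionRing K]
    [AddCommGroup U] [Module K U] [AddCommGroup V] [Module K V] [AddCommGroup W] [Module K W]
    [FiniteDimensional K W] [AddCommGroup X] [Module K X]
    (f : U →ₗ[K] V) (Φ : V →ₗ[K] W) (g : W →ₗ[K] X) :
    finrank K (LinearMap.range (g ∘ₗ Φ ∘ₗ f)) ≤ finrank K (LinearMap.range Φ) := by
  rw [LinearMap.range_comp]
  exact (finrank_map_le _ _).trans (finrank_mono (LinearMap.range_comp_le_range _ _))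

section DiagonalCompression

variable {R n : Type*} [Field R] [Fintype n] [DecidableEq n]

theorem Matrix.mulVecLin_of_diag_apply_single (Φ : Matrix n n R →ₗ[R] Matrix n n R) :
    (of fun j i ↦ Φ (single i i 1) j j).mulVecLin =
      diagLinearMap n R R ∘ₗ Φ ∘ₗ diagonalLinearMap n R R := by
  refine LinearMap.pi_ext' fun i ↦ LinearMap.ext_ring ?_
  ext j
  simp [diagonal_single]

theorem Matrix.rank_of_diag_apply_single_le (Φ : Matrix n n R →ₗ[R] Matrix n n R) :
    (of fun j i ↦ Φ (single i i 1) j j).rank ≤ finrank R (LinearMap.range Φ) := by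
  rw [rank, mulVecLin_of_diag_apply_single]
  exact LinearMap.finrank_range_comp_comp_le _ _ _

end DiagonalCompression

section Kraus

variable {m n ι : Type*} [Fintype ι]

theorem Matrix.mul_single_one_mul_conjTranspose_apply_self [Fintype n] [DecidableEq n]
    (A : Matrix m n ℂ) (i : n) (j : m) :
    (A * single i i (1 : ℂ) * Aᴴ) j j = Complex.normSq (A j i) := by
  simp [mul_apply, single_apply, ite_and, Complex.mul_conj]

theorem Matrix.conjTranspose_mul_self_apply_self [Fintype m] (A : Matrix m n ℂ) (i : n) :
    (Aᴴ * A) i i = ∑ j, (Complex.normSq (A j i) : ℂ) := by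
  simp [mul_apply, Complex.normSq_eq_conj_mul_self]

theorem Matrix.mul_conjTranspose_self_apply_self [Fintype n] (A : Matrix m n ℂ) (j : m) :
    (A * Aᴴ) j j = ∑ i, (Complex.normSq (A j i) : ℂ) := by
  simp [mul_apply, Complex.mul_conj]

theorem Matrix.of_sum_normSq_mem_doublyStochastic [Fintype n] [DecidableEq n]
    (K : ι → Matrix n n ℂ) (hu : ∑ k, K k * (K k)ᴴ = 1) (htp : ∑ k, (K k)ᴴ * K k = 1) :
    (of fun i j ↦ ∑ k, Complex.normSq (K k j i)) ∈ doublyStochastic ℝ n := by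
  refine mem_doublyStochastic_iff_sum.mpr
    ⟨fun i j ↦ Finset.sum_nonneg fun k _ ↦ Complex.normSq_nonneg _, fun i ↦ ?_, fun j ↦ ?_⟩
  · have h := congr_fun₂ htp i i
    simp only [sum_apply, conjTranspose_mul_self_apply_self, one_apply_eq] at h
    simp only [of_apply]
    rw [Finset.sum_comm]
    exact_mod_cast h
  · have h := congr_fun₂ hu j j
    simp only [sum_apply, mul_conjTranspose_self_apply_self, one_apply_eq] at h
    simp only [of_apply]
    rw [Finset.sum_comm]
    exact_mod_cast h

end Kraus

/-- For a unital, trace-preserving completely positive map `Φ(X) = ∑ₖ Kₖ X Kₖ*` on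
`Mₙ(ℂ)`, the matrix `D_Φ` with `(D_Φ)_{ij} = Φ(E_{ii})_{jj}` is doubly stochastic and
`rank(Φ) ≥ rank(D_Φ)`. -/
theorem rank_ge_rank_doublyStochastic {n p : ℕ}
    (K : Fin p → Matrix (Fin n) (Fin n) ℂ)
    (hu : ∑ k, K k * (K k)ᴴ = 1)
    (htp : ∑ k, (K k)ᴴ * K k = 1)
    (Φ : Matrix (Fin n) (Fin n) ℂ →ₗ[ℂ] Matrix (Fin n) (Fin n) ℂ)
    (hΦ : ∀ X, Φ X = ∑ k, K k * X * (K k)ᴴ)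
    (D : Matrix (Fin n) (Fin n) ℝ)
    (hD : ∀ i j, (D i j : ℂ) = Φ (Matrix.single i i 1) j j) :
    (∀ i j, 0 ≤ D i j) ∧ (∀ i, ∑ j, D i j = 1) ∧ (∀ j, ∑ i, D i j = 1) ∧
      D.rank ≤ Module.finrank ℂ (LinearMap.range Φ) := by
  have hD_eq : D = of fun i j ↦ ∑ k, Complex.normSq (K k j i) := by
    ext i j
    have h := hD i j
    simp only [hΦ, Matrix.sum_apply, mul_single_one_mul_conjTranspose_apply_self] at h
    exact_mod_cast h
  have hDS : D ∈ doublyStochastic ℝ (Fin n) := hD_eq ▸ of_sum_normSq_mem_doublyStochastic K hu htp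
  refine ⟨fun i j ↦ nonneg_of_mem_doublyStochastic hDS, sum_row_of_mem_doublyStochastic hDS,
    sum_col_of_mem_doublyStochastic hDS, ?_⟩
  calc D.rank ≤ (D.map (algebraMap ℝ ℂ)).rank := rank_le_rank_map_algebraMap D
    _ = (D.map (algebraMap ℝ ℂ))ᵀ.rank := (rank_transpose _).symm
    _ = (of fun j i ↦ Φ (single i i 1) j j).rank := by
      congr 1
      ext j i
      simp [hD]
    _ ≤ finrank ℂ (LinearMap.range Φ) := rank_of_diag_apply_single_le Φ
end
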